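/- Laplace mechanism: let f be a function from datasets to ℝ^d with L1-sensitivity Δf, meaning ‖f(D) − f(D')‖₁ ≤ Δf for all pairs of neighboring datasets D, D'. For any ε > 0, the mechanism A(D) = f(D) + (Z₁,…,Z_d), where Z₁,…,Z_d are independent Laplace random variables with density (ε/(2·Δf))·e^{−ε·|z|/Δf} on ℝ, satisfies ε-DP, i.e., (ε, 0)-DP. -/

import Mathlib

open MeasureTheory

/-- The Laplace distribution on `ℝ` with mean 0 and scale `b`, i.e. the measure with
density `(1/(2b))·e^{−|z|/b}` with respect to Lebesgue measure. -/
noncomputable def laplaceMeasure (b : ℝ) : Measure ℝ :=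
  volume.withDensity fun z => ENNReal.ofReal ((2 * b)⁻¹ * Real.exp (-|z| / b))

lemma lintegral_pi_prod : ∀ {n : ℕ} (μ : Fin n → Measure ℝ), (∀ i, SigmaFinite (μ i)) →
    ∀ (g : Fin n → ℝ → ENNReal), (∀ i, Measurable (g i)) →
    ∫⁻ x, ∏ i, g i (x i) ∂Measure.pi μ = ∏ i, ∫⁻ z, g i z ∂(μ i) := by
  intro n
  induction n with
  | zero =>
    intro μ _ g _
    rw [Measure.pi_of_empty μ]
    simp
  | succ n ih =>
    intro μ hσ g hg
    haveI := hσ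
    have hmp := measurePreserving_piFinSuccAbove μ 0
    set e := MeasurableEquiv.piFinSuccAbove (fun _ : Fin (n+1) => ℝ) 0
    have hG : Measurable fun p : ℝ × (Fin n → ℝ) =>
        g 0 p.1 * ∏ j, g ((0 : Fin (n+1)).succAbove j) (p.2 j) := by
      exact (hg 0).comp measurable_fst |>.mul
        (Finset.measurable_prod _ fun j _ =>
          (hg _).comp ((measurable_pi_apply j).comp measurable_snd))
    have h1 := hmp.lintegral_comp hG
    have h2 : ∀ x : Fin (n+1) → ℝ,
        (g 0 (e x).1 * ∏ j, g ((0 : Fin (n+1)).succAbove j) ((e x).2 j))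
          = ∏ i, g i (x i) := by
      intro x
      rw [Fin.prod_univ_succ]
      congr 1
    calc ∫⁻ x, ∏ i, g i (x i) ∂Measure.pi μ
        = ∫⁻ p, g 0 p.1 * ∏ j, g ((0 : Fin (n+1)).succAbove j) (p.2 j)
            ∂((μ 0).prod (Measure.pi fun j => μ ((0 : Fin (n+1)).succAbove j))) := by
          rw [← h1]; exact lintegral_congr fun x => (h2 x).symm
      _ = (∫⁻ z, g 0 z ∂μ 0) *
            ∏ j, ∫⁻ z, g ((0 : Fin (n+1)).succAbove j) z ∂μ ((0 : Fin (n+1)).succAbove j) := by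
          have hm2 : Measurable fun y : Fin n → ℝ =>
              ∏ j, g ((0 : Fin (n+1)).succAbove j) (y j) :=
            Finset.measurable_prod _ fun j _ => (hg _).comp (measurable_pi_apply j)
          rw [lintegral_prod_mul ((hg 0).aemeasurable) hm2.aemeasurable]
          rw [ih _ (fun j => hσ _) _ (fun j => hg _)]
      _ = ∏ i, ∫⁻ z, g i z ∂μ i := by rw [Fin.prod_univ_succ]; rfl

lemma pi_withDensity {n : ℕ} (g : Fin n → ℝ → ENNReal) (hg : ∀ i, Measurable (g i))
    (hσ : ∀ i, SigmaFinite ((volume : Measure ℝ).withDensity (g i))) :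
    Measure.pi (fun i => (volume : Measure ℝ).withDensity (g i)) =
      (volume : Measure (Fin n → ℝ)).withDensity (fun x => ∏ i, g i (x i)) := by
  haveI := hσ
  refine Measure.pi_eq fun s hs => ?_
  rw [withDensity_apply _ (MeasurableSet.univ_pi hs)]
  have hind : ∀ x : Fin n → ℝ,
      (Set.univ.pi s).indicator (fun x => ∏ i, g i (x i)) x
        = ∏ i, (s i).indicator (g i) (x i) := by
    intro x
    by_cases hx : x ∈ Set.univ.pi s
    · rw [Set.indicator_of_mem hx]
      exact Finset.prod_congr rfl fun i _ =>
        (Set.indicator_of_mem (hx i (Set.mem_univ i)) _).symm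
    · rw [Set.indicator_of_notMem hx]
      rw [Set.mem_univ_pi] at hx
      push_neg at hx
      obtain ⟨i, hi⟩ := hx
      exact (Finset.prod_eq_zero (Finset.mem_univ i)
        (Set.indicator_of_notMem hi _)).symm
  rw [← lintegral_indicator (MeasurableSet.univ_pi hs)]
  rw [lintegral_congr hind]
  rw [show (volume : Measure (Fin n → ℝ)) = Measure.pi fun _ => volume from rfl]
  rw [lintegral_pi_prod _ (fun _ => inferInstance) _
    (fun i => (hg i).indicator (hs i))]
  exact Finset.prod_congr rfl fun i _ => by
    rw [lintegral_indicator (hs i), withDensity_apply _ (hs i)]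

/-- Laplace mechanism: let `f` be a function from datasets to `ℝ^d` with L1-sensitivity
`Δf` on neighboring datasets. For any `ε > 0`, the mechanism
`A(D) = f(D) + (Z₁,…,Z_d)` with `Z_i` independent Laplace with density
`(ε/(2Δf))·e^{−ε|z|/Δf}` (i.e. scale `Δf/ε`) satisfies `ε`-DP, i.e. `(ε,0)`-DP. -/
theorem laplace_mechanism {D : Type*} {d : ℕ}
    (N : D → D → Prop) (f : D → (Fin d → ℝ)) (Δf : ℝ) (hΔf : 0 < Δf)
    (hsens : ∀ x x', N x x' → (∑ i, |f x i - f x' i|) ≤ Δf)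
    (ε : ℝ) (hε : 0 < ε)
    (A : D → Measure (Fin d → ℝ))
    (hA : ∀ x, A x =
      Measure.map (fun z => f x + z) (Measure.pi fun _ : Fin d => laplaceMeasure (Δf / ε))) :
    ∀ x x', N x x' → ∀ S : Set (Fin d → ℝ), MeasurableSet S →
      A x S ≤ ENNReal.ofReal (Real.exp ε) * A x' S := by
  intro x x' hN S hS
  set b : ℝ := Δf / ε with hb_def
  have hb : 0 < b := div_pos hΔf hε
  set g : ℝ → ENNReal := fun z => ENNReal.ofReal ((2 * b)⁻¹ * Real.exp (-|z| / b)) with hg_def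
  have hgm : Measurable g := by
    apply Measurable.ennreal_ofReal
    fun_prop
  set G : (Fin d → ℝ) → ENNReal := fun y => ∏ i, g (y i) with hG_def
  have hGm : Measurable G := Finset.measurable_prod _ fun i _ => hgm.comp (measurable_pi_apply i)
  haveI hσ : SigmaFinite ((volume : Measure ℝ).withDensity g) :=
    MeasureTheory.SigmaFinite.withDensity_ofReal _
  have hpi : (Measure.pi fun _ : Fin d => laplaceMeasure b)
      = (volume : Measure (Fin d → ℝ)).withDensity G := by
    have := pi_withDensity (n := d) (fun _ => g) (fun _ => hgm) (fun _ => hσ)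
    exact this
  set c : Fin d → ℝ := f x - f x' with hc_def
  have hcsum : (∑ i, |c i|) ≤ Δf := by
    simpa [hc_def] using hsens x x' hN
  -- pointwise density bound
  have hpt : ∀ z : Fin d → ℝ, G z ≤ ENNReal.ofReal (Real.exp ε) * G (c + z) := by
    intro z
    have h1 : ∀ i : Fin d, g (z i) ≤
        ENNReal.ofReal (Real.exp (|c i| / b)) * g (c i + z i) := by
      intro i
      rw [hg_def]
      dsimp only
      rw [← ENNReal.ofReal_mul (Real.exp_nonneg _)]
      apply ENNReal.ofReal_le_ofReal
      rw [show Real.exp (|c i| / b) * ((2 * b)⁻¹ * Real.exp (-|c i + z i| / b))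
            = (2 * b)⁻¹ * (Real.exp (|c i| / b) * Real.exp (-|c i + z i| / b)) by ring]
      apply mul_le_mul_of_nonneg_left _ (by positivity)
      rw [← Real.exp_add]
      apply Real.exp_le_exp.mpr
      have habs : -|z i| ≤ |c i| + -|c i + z i| := by
        have := abs_add_le (c i) (z i); linarith
      calc -|z i| / b ≤ (|c i| + -|c i + z i|) / b := by gcongr
        _ = |c i| / b + -|c i + z i| / b := by ring
    calc G z ≤ ∏ i, (ENNReal.ofReal (Real.exp (|c i| / b)) * g (c i + z i)) :=
          Finset.prod_le_prod' fun i _ => h1 i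
      _ = (∏ i, ENNReal.ofReal (Real.exp (|c i| / b))) * ∏ i, g (c i + z i) :=
          Finset.prod_mul_distrib
      _ ≤ ENNReal.ofReal (Real.exp ε) * G (c + z) := by
          apply mul_le_mul'
          · rw [← ENNReal.ofReal_prod_of_nonneg (fun i _ => Real.exp_nonneg _),
              ← Real.exp_sum]
            apply ENNReal.ofReal_le_ofReal
            apply Real.exp_le_exp.mpr
            rw [← Finset.sum_div]
            rw [div_le_iff₀ hb]
            calc (∑ i, |c i|) ≤ Δf := hcsum
              _ = ε * b := by rw [hb_def]; field_simp
          · apply le_of_eq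
            exact Finset.prod_congr rfl fun i _ => by rw [Pi.add_apply]
  -- measure computation
  rw [hA x, hA x',
    Measure.map_apply (measurable_const_add (f x)) hS,
    Measure.map_apply (measurable_const_add (f x')) hS, hpi]
  set T₁ : Set (Fin d → ℝ) := (fun z => f x + z) ⁻¹' S with hT1_def
  set T₂ : Set (Fin d → ℝ) := (fun z => f x' + z) ⁻¹' S with hT2_def
  have hT1 : MeasurableSet T₁ := hS.preimage (measurable_const_add (f x))
  have hT2 : MeasurableSet T₂ := hS.preimage (measurable_const_add (f x'))
  rw [withDensity_apply _ hT1, withDensity_apply _ hT2]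
  have hmp : MeasurePreserving (fun z : Fin d → ℝ => c + z)
      (volume : Measure (Fin d → ℝ)) volume := measurePreserving_add_left volume c
  have hpre : (fun z : Fin d → ℝ => c + z) ⁻¹' T₂ = T₁ := by
    have hkey : ∀ z : Fin d → ℝ, f x' + (c + z) = f x + z := by
      intro z; simp only [hc_def]; abel
    ext z
    simp only [hT1_def, hT2_def, Set.mem_preimage, hkey]
  calc ∫⁻ z in T₁, G z ∂volume
      ≤ ∫⁻ z in T₁, ENNReal.ofReal (Real.exp ε) * G (c + z) ∂volume :=
        setLIntegral_mono (measurable_const.mul (hGm.comp (measurable_const_add c)))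
          (fun z _ => hpt z)
    _ = ENNReal.ofReal (Real.exp ε) * ∫⁻ z in T₁, G (c + z) ∂volume :=
        lintegral_const_mul _ (hGm.comp (measurable_const_add c))
    _ = ENNReal.ofReal (Real.exp ε) * ∫⁻ w in T₂, G w ∂volume := by
        rw [← hpre, hmp.setLIntegral_comp_preimage hT2 hGm]
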